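/- For any pointed item e and symbol a: R(move(e,a)) = nf_ε(∂_a(R(e))), i.e., the read-back of the moved state equals the look-ahead normal form of the Brzozowski derivative of the read-back. -/

import Mathlib

namespace PointedRE

inductive PItem (α : Type) : Type
  | empty : PItem α
  | eps : PItem α
  | ch : α → PItem α
  | pch : α → PItem α
  | plus : PItem α → PItem α → PItem α
  | cat : PItem α → PItem α → PItem α
  | star : PItem α → PItem α

namespace PItem

variable {α : Type}

/-- The carrier: erase all points. -/
def carrier : PItem α → RegularExpression α
  | empty => 0
  | eps => 1
  | ch a => RegularExpression.char a
  | pch a => RegularExpression.char a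
  | plus e1 e2 => carrier e1 + carrier e2
  | cat e1 e2 => carrier e1 * carrier e2
  | star e => (carrier e).star

/-- ε(b) : {ε} if b, ∅ otherwise. -/
def ebool (b : Bool) : Language α := if b then 1 else 0

/-- The pointed language of a pointed item. -/
def Lp : PItem α → Language α
  | empty => 0
  | eps => 0
  | ch _ => 0
  | pch a => {[a]}
  | plus e1 e2 => Lp e1 + Lp e2
  | cat e1 e2 => Lp e1 * (carrier e2).matches' + Lp e2
  | star e => Lp e * KStar.kstar (carrier e).matches'

/-- A pointed regular expression (pre): a pointed item with a trailing boolean. -/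
abbrev Pre (α : Type) := PItem α × Bool

/-- The pointed language of a pre. -/
def LpP (p : Pre α) : Language α := Lp p.1 + ebool p.2

/-- Broadcasting a point inside a pointed item. -/
def broadcast : PItem α → Pre α
  | empty => (empty, false)
  | eps => (eps, true)
  | ch a => (pch a, false)
  | pch a => (pch a, false)
  | plus e1 e2 =>
      (plus (broadcast e1).1 (broadcast e2).1, (broadcast e1).2 || (broadcast e2).2)
  | cat e1 e2 =>
      if (broadcast e1).2 then
        (cat (broadcast e1).1 (broadcast e2).1, (broadcast e2).2)
      else (cat (broadcast e1).1 e2, false)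
  | star e => (star (broadcast e).1, true)

/-- Lifted sum on pres. -/
def oplus (p1 p2 : Pre α) : Pre α := (plus p1.1 p2.1, p1.2 || p2.2)

/-- Lifted concatenation on pres. -/
def odot (p1 p2 : Pre α) : Pre α :=
  if p1.2 then (cat p1.1 (broadcast p2.1).1, p2.2 || (broadcast p2.1).2)
  else (cat p1.1 p2.1, p2.2)

/-- Lifted Kleene star on pres. -/
def ostar (p : Pre α) : Pre α :=
  if p.2 then (star (broadcast p.1).1, true) else (star p.1, false)

/-- Broadcasting extended to pres. -/
def broadcastP (p : Pre α) : Pre α :=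
  ((broadcast p.1).1, p.2 || (broadcast p.1).2)

/-- The move operation on pointed items. -/
def move [DecidableEq α] (a : α) : PItem α → Pre α
  | empty => (empty, false)
  | eps => (eps, false)
  | ch b => (ch b, false)
  | pch b => if b = a then (ch b, true) else (ch b, false)
  | plus e1 e2 => oplus (move a e1) (move a e2)
  | cat e1 e2 => odot (move a e1) (move a e2)
  | star e => ostar (move a e)

/-- The move operation iterated along a string (on pres, ignoring the trailing point). -/
def moves [DecidableEq α] : Pre α → List α → Pre α
  | p, [] => p
  | p, a :: w => moves (move a p.1) w

/-- Embedding of regular expressions as point-free pointed items. -/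
def embed : RegularExpression α → PItem α
  | .zero => empty
  | .epsilon => eps
  | .char a => ch a
  | .plus e1 e2 => plus (embed e1) (embed e2)
  | .comp e1 e2 => cat (embed e1) (embed e2)
  | .star e => star (embed e)

/-- Read-back of a pointed item as a set of regular expressions. -/
def R : PItem α → Set (RegularExpression α)
  | empty => ∅
  | eps => ∅
  | ch _ => ∅
  | pch a => {RegularExpression.char a}
  | plus e1 e2 => R e1 ∪ R e2
  | cat e1 e2 => (fun r => r * carrier e2) '' R e1 ∪ R e2
  | star e => (fun r => r * (carrier e).star) '' R e

/-- Read-back of a pre. -/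
def RP (p : Pre α) : Set (RegularExpression α) :=
  R p.1 ∪ (if p.2 then {1} else ∅)

/-- The language of a set of regular expressions. -/
def LS (S : Set (RegularExpression α)) : Language α :=
  {w | ∃ r ∈ S, w ∈ r.matches'}

/-- The look-ahead normal form of a regular expression (without ε). -/
def nf : RegularExpression α → Set (RegularExpression α)
  | .zero => ∅
  | .epsilon => ∅
  | .char a => {RegularExpression.char a}
  | .plus e1 e2 => nf e1 ∪ nf e2
  | .comp e1 e2 =>
      if e1.matchEpsilon then (fun r => r * e2) '' nf e1 ∪ nf e2
      else (fun r => r * e2) '' nf e1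
  | .star e => (fun r => r * e.star) '' nf e

/-- The look-ahead normal form with ε added when the expression is nullable. -/
def nfe (e : RegularExpression α) : Set (RegularExpression α) :=
  nf e ∪ (if e.matchEpsilon then {1} else ∅)

/-- nf_ε lifted to sets of regular expressions. -/
def nfeS (S : Set (RegularExpression α)) : Set (RegularExpression α) :=
  ⋃ r ∈ S, nfe r

/-- Merge of two pointed items (meaningful when they share the same carrier). -/
def merge : PItem α → PItem α → PItem α
  | ch a, pch _ => pch a
  | plus e1 e2, plus f1 f2 => plus (merge e1 f1) (merge e2 f2)
  | cat e1 e2, cat f1 f2 => cat (merge e1 f1) (merge e2 f2)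
  | star e, star f => star (merge e f)
  | e, _ => e

/-- Merge extended to pres. -/
def mergeP (p q : Pre α) : Pre α := (merge p.1 q.1, p.2 || q.2)

end PItem
end PointedRE

open PointedRE PItem

/-!
Every member of `R e` is a non-nullable look-ahead form, so `∂_a (r c) = (∂_a r) c`, and
`nf_ε (x c)` arises from `nf_ε x` by appending `c` to each member other than `ε` and replacing
`ε` by `nf_ε c` (`nfeMul`). On read-backs, `⊙` and `⋆` of pres act by exactly this operation,
because broadcasting a point through `q` reads back as `nf_ε` of its carrier together with `R q`.
Structural induction on `e` then gives the claim.
-/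

namespace PointedRE
namespace PItem

variable {α : Type}

theorem matchEpsilon_mul (p q : RegularExpression α) :
    (p * q).matchEpsilon = (p.matchEpsilon && q.matchEpsilon) := rfl

theorem deriv_mul_of_matchEpsilon_eq_false [DecidableEq α] {p : RegularExpression α}
    (hp : p.matchEpsilon = false) (q : RegularExpression α) (a : α) :
    (p * q).deriv a = p.deriv a * q := by
  simp [RegularExpression.deriv, hp]

theorem nf_mul (p q : RegularExpression α) :
    nf (p * q) = (· * q) '' nf p ∪ (if p.matchEpsilon then nf q else ∅) := by
  change nf (.comp p q) = _
  rw [nf]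
  split <;> simp [*]

theorem matchEpsilon_of_mem_nf {p r : RegularExpression α} (h : r ∈ nf p) :
    r.matchEpsilon = false := by
  induction p generalizing r with
  | zero | epsilon => simp [nf] at h
  | char a => simp only [nf, Set.mem_singleton_iff] at h; subst h; rfl
  | plus p q ihp ihq => rcases h with h | h <;> [exact ihp h; exact ihq h]
  | comp p q ihp ihq =>
      simp only [nf] at h
      split at h
      · rcases h with ⟨s, hs, rfl⟩ | h
        · simp [matchEpsilon_mul, ihp hs]
        · exact ihq h
      · obtain ⟨s, hs, rfl⟩ := h
        simp [matchEpsilon_mul, ihp hs]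
  | star p ih =>
      obtain ⟨s, hs, rfl⟩ := h
      simp [matchEpsilon_mul, ih hs]

theorem one_notMem_of_forall_matchEpsilon {S : Set (RegularExpression α)}
    (hS : ∀ r ∈ S, r.matchEpsilon = false) : (1 : RegularExpression α) ∉ S :=
  fun h => nomatch hS 1 h

def nfeMul (S : Set (RegularExpression α)) (c : RegularExpression α) :
    Set (RegularExpression α) :=
  (· * c) '' (S \ {1}) ∪ {r ∈ nfe c | 1 ∈ S}

theorem nfeMul_biUnion {ι : Type*} (I : Set ι) (S : ι → Set (RegularExpression α))
    (c : RegularExpression α) : nfeMul (⋃ i ∈ I, S i) c = ⋃ i ∈ I, nfeMul (S i) c := by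
  ext x
  simp only [nfeMul, Set.mem_union, Set.mem_image, Set.mem_sdiff, Set.mem_iUnion,
    Set.mem_ofPred_eq]
  grind

theorem nfeMul_union_ite_one {A : Set (RegularExpression α)}
    (hA : (1 : RegularExpression α) ∉ A) (b : Bool) (c : RegularExpression α) :
    nfeMul (A ∪ if b then {1} else ∅) c = (· * c) '' A ∪ if b then nfe c else ∅ := by
  ext x
  cases b <;> simp [nfeMul] <;> grind

theorem nfe_mul (p q : RegularExpression α) : nfe (p * q) = nfeMul (nfe p) q := by
  rw [nfe, nfe.eq_1 p, nfeMul_union_ite_one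
    (one_notMem_of_forall_matchEpsilon fun _ => matchEpsilon_of_mem_nf), nf_mul,
    matchEpsilon_mul, nfe]
  cases p.matchEpsilon <;> cases q.matchEpsilon <;> simp

theorem biUnion_nfe_deriv_mul [DecidableEq α] {T : Set (RegularExpression α)}
    (hT : ∀ r ∈ T, r.matchEpsilon = false) (c : RegularExpression α) (a : α) :
    ⋃ r ∈ T, nfe ((r * c).deriv a) = nfeMul (⋃ r ∈ T, nfe (r.deriv a)) c := by
  rw [nfeMul_biUnion]
  refine Set.iUnion₂_congr fun r hr => ?_
  rw [deriv_mul_of_matchEpsilon_eq_false (hT r hr), nfe_mul]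

theorem matchEpsilon_of_mem_R {e : PItem α} {r : RegularExpression α} (h : r ∈ R e) :
    r.matchEpsilon = false := by
  induction e generalizing r with
  | empty | eps | ch _ => simp [R] at h
  | pch a => simp only [R, Set.mem_singleton_iff] at h; subst h; rfl
  | plus e1 e2 ih1 ih2 => rcases h with h | h <;> [exact ih1 h; exact ih2 h]
  | cat e1 e2 ih1 ih2 =>
      rcases h with ⟨s, hs, rfl⟩ | h
      · simp [matchEpsilon_mul, ih1 hs]
      · exact ih2 h
  | star e ih =>
      obtain ⟨s, hs, rfl⟩ := h
      simp [matchEpsilon_mul, ih hs]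

theorem one_notMem_R (e : PItem α) : (1 : RegularExpression α) ∉ R e :=
  one_notMem_of_forall_matchEpsilon fun _ => matchEpsilon_of_mem_R

theorem carrier_broadcast (e : PItem α) : carrier (broadcast e).1 = carrier e := by
  induction e with
  | empty | eps | ch _ | pch _ => rfl
  | plus e1 e2 ih1 ih2 => simp [broadcast, carrier, ih1, ih2]
  | cat e1 e2 ih1 ih2 =>
      simp only [broadcast]
      split <;> simp [carrier, ih1, ih2]
  | star e ih => simp [broadcast, carrier, ih]

theorem snd_broadcast (e : PItem α) : (broadcast e).2 = (carrier e).matchEpsilon := by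
  induction e with
  | empty | eps | ch _ | pch _ => rfl
  | plus e1 e2 ih1 ih2 => simp [broadcast, carrier, ih1, ih2, RegularExpression.matchEpsilon]
  | cat e1 e2 ih1 ih2 =>
      simp only [broadcast]
      split <;> simp_all [carrier, matchEpsilon_mul]
  | star e ih => rfl

theorem R_broadcast (e : PItem α) : R (broadcast e).1 = nf (carrier e) ∪ R e := by
  induction e with
  | empty | eps | ch _ | pch _ => simp [broadcast, R, carrier, nf]
  | plus e1 e2 ih1 ih2 =>
      simp only [broadcast, R, carrier, ih1, ih2]
      change _ = nf (.plus _ _) ∪ _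
      rw [nf]
      ext x; simp only [Set.mem_union]; tauto
  | cat e1 e2 ih1 ih2 =>
      simp only [broadcast, snd_broadcast]
      split <;> rename_i h
      · simp only [R, carrier_broadcast, ih1, ih2, carrier, nf_mul, h, if_true, Set.image_union]
        ext x; simp only [Set.mem_union]; tauto
      · simp only [R, ih1, carrier, nf_mul, h, Set.image_union]
        simp [Set.union_assoc]
  | star e ih =>
      simp only [broadcast, R, carrier_broadcast, ih, carrier, Set.image_union]
      rfl

theorem RP_broadcast (e : PItem α) : RP (broadcast e) = nfe (carrier e) ∪ R e := by
  rw [RP, R_broadcast, snd_broadcast, nfe]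
  ext x; simp only [Set.mem_union]; tauto

theorem ite_or_eq_union (b b' : Bool) (s : Set α) :
    (if (b || b') = true then s else ∅) = (if b then s else ∅) ∪ (if b' then s else ∅) := by
  cases b <;> cases b' <;> simp

theorem RP_oplus (p q : Pre α) : RP (oplus p q) = RP p ∪ RP q := by
  rw [RP, oplus, R, ite_or_eq_union, Set.union_union_union_comm, RP, RP]

theorem RP_odot (p q : Pre α) : RP (odot p q) = nfeMul (RP p) (carrier q.1) ∪ RP q := by
  rw [RP.eq_1 p, nfeMul_union_ite_one (one_notMem_R _)]
  unfold odot
  split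
  · ext x
    have hbc := Set.ext_iff.mp (RP_broadcast q.1) x
    simp only [RP, R, carrier_broadcast, ite_or_eq_union, Set.mem_union] at hbc ⊢
    tauto
  · simp [RP, R, Set.union_assoc]

theorem RP_ostar (p : Pre α) : RP (ostar p) = nfeMul (RP p) (carrier p.1).star := by
  rw [RP.eq_1 p, nfeMul_union_ite_one (one_notMem_R _)]
  unfold ostar
  split
  · simp only [RP, R, R_broadcast, carrier_broadcast, if_true, nfe,
      RegularExpression.matchEpsilon, Set.image_union, Set.union_assoc]
    rw [nf.eq_6, Set.union_left_comm]
  · simp [RP, R]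

theorem carrier_move [DecidableEq α] (a : α) (e : PItem α) :
    carrier (move a e).1 = carrier e := by
  induction e with
  | empty | eps | ch _ => rfl
  | pch b => simp only [move]; split <;> rfl
  | plus e1 e2 ih1 ih2 => simp [move, oplus, carrier, ih1, ih2]
  | cat e1 e2 ih1 ih2 =>
      simp only [move, odot]
      split <;> simp [carrier, carrier_broadcast, ih1, ih2]
  | star e ih =>
      simp only [move, ostar]
      split <;> simp [carrier, carrier_broadcast, ih]

theorem RP_move [DecidableEq α] (a : α) (e : PItem α) :
    RP (move a e) = ⋃ r ∈ R e, nfe (r.deriv a) := by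
  induction e with
  | empty | eps | ch _ => simp [move, RP, R]
  | pch b =>
      by_cases h : b = a
      · subst h
        simp [move, RP, R, nfe, nf, RegularExpression.matchEpsilon]
      · simp [move, RP, R, nfe, nf, h, RegularExpression.matchEpsilon]
  | plus e1 e2 ih1 ih2 => rw [move, RP_oplus, ih1, ih2, R, Set.biUnion_union]
  | cat e1 e2 ih1 ih2 =>
      rw [move, RP_odot, ih1, ih2, carrier_move, R, Set.biUnion_union, Set.biUnion_image,
        biUnion_nfe_deriv_mul fun _ => matchEpsilon_of_mem_R]
  | star e ih =>
      rw [move, RP_ostar, ih, carrier_move, R, Set.biUnion_image,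
        biUnion_nfe_deriv_mul fun _ => matchEpsilon_of_mem_R]

end PItem
end PointedRE

/-- R(move(e,a)) = nf_ε(∂_a(R(e))). -/
theorem stmt16 {α : Type} [DecidableEq α] (e : PItem α) (a : α) :
    RP (move a e) = nfeS ((fun r => r.deriv a) '' R e) := by
  rw [RP_move, nfeS, Set.biUnion_image]
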